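/- Let G be a weighted concurrent game and σ_Agt a strategy profile in G with payoff vector p = payoff(σ_Agt). Then σ_Agt is (t,r)-immune if, and only if, the Eve strategy π(σ_Agt) is winning in the deviator game D(G) for the immunity objective I(t,r,p) = { ρ : |δ(ρ)| > t } ∪ { ρ : ∀A ∈ Agt ∖ δ(ρ), p(A) − r ≤ payoff_A(π(ρ)) }. -/
import Mathlib


open Filter

section Defs

variable {Stat Agt Act : Type}

/-- A weighted concurrent game: finite sets of states/players/actions are imposed
via `Fintype` assumptions in the theorems. -/
structure CGame (Stat Agt Act : Type) where
  s0 : Stat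
  Tab : Stat → (Agt → Act) → Stat
  w : Agt → Stat → ℤ

/-- A history: an initial state followed by a finite alternating list of moves and states. -/
abbrev Hist (Stat Agt Act : Type) := Stat × List ((Agt → Act) × Stat)

abbrev Strategy (Stat Agt Act : Type) := Hist Stat Agt Act → Act

abbrev Profile (Stat Agt Act : Type) := Agt → Strategy Stat Agt Act

/-- A play: an infinite alternating sequence of states and moves. -/
structure Play (Stat Agt Act : Type) where
  state : ℕ → Stat
  move : ℕ → Agt → Act

/-- The prefix `ρ_{≤ m}` of a play: the history containing states `0..m` and moves `0..m-1`. -/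
def Play.pref (ρ : Play Stat Agt Act) (m : ℕ) : Hist Stat Agt Act :=
  (ρ.state 0, (List.range m).map fun j => (ρ.move j, ρ.state (j + 1)))

/-- `ρ` respects the transition function of `G` (it is a play of `G`). -/
def IsPlay (G : CGame Stat Agt Act) (ρ : Play Stat Agt Act) : Prop :=
  ∀ j, ρ.state (j + 1) = G.Tab (ρ.state j) (ρ.move j)

/-- The deviators from move `a` to move `a'`. -/
def devMove (a a' : Agt → Act) : Set Agt := {A | a A ≠ a' A}

/-- The deviators of a play with respect to a strategy profile. -/
def devPlay (σ : Profile Stat Agt Act) (ρ : Play Stat Agt Act) : Set Agt :=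
  ⋃ i : ℕ, devMove (ρ.move i) fun A => σ A (ρ.pref i)

/-- The deviators of the prefix `ρ_{≤ i}` with respect to a strategy profile. -/
def devPref (σ : Profile Stat Agt Act) (ρ : Play Stat Agt Act) (i : ℕ) : Set Agt :=
  ⋃ j ∈ Finset.range i, devMove (ρ.move j) fun A => σ A (ρ.pref j)

/-- A play is compatible with the strategy of coalition `C` (move condition). -/
def Compatible (C : Set Agt) (σ : Profile Stat Agt Act) (ρ : Play Stat Agt Act) : Prop :=
  ∀ j, ∀ A ∈ C, ρ.move j A = σ A (ρ.pref j)

/-- `Out_G(s, σ_C)`: plays of `G` starting at `s` compatible with `σ` on coalition `C`. -/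
def OutFrom (G : CGame Stat Agt Act) (s : Stat) (C : Set Agt) (σ : Profile Stat Agt Act) :
    Set (Play Stat Agt Act) :=
  {ρ | ρ.state 0 = s ∧ IsPlay G ρ ∧ Compatible C σ ρ}

open Classical in
/-- The profile `(σ_{-C}, σ'_C)`: agrees with `σ'` on `C` and with `σ` outside `C`. -/
noncomputable def combine (C : Set Agt) (σ σ' : Profile Stat Agt Act) : Profile Stat Agt Act :=
  fun A => if A ∈ C then σ' A else σ A

/-- Mean payoff of player `A` along a play. -/
noncomputable def payoffPlay (G : CGame Stat Agt Act) (A : Agt) (ρ : Play Stat Agt Act) : ℝ :=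
  Filter.liminf
    (fun m => (∑ l ∈ Finset.range (m + 1), (G.w A (ρ.state l) : ℝ)) / (m : ℝ)) Filter.atTop

def histLast (h : Hist Stat Agt Act) : Stat := (h.2.map Prod.snd).getLastD h.1

/-- The history of length `m+1` produced by the strategy profile `σ` from `s0`. -/
def outHist (G : CGame Stat Agt Act) (σ : Profile Stat Agt Act) : ℕ → Hist Stat Agt Act
  | 0 => (G.s0, [])
  | m + 1 =>
    let h := outHist G σ m
    (h.1, h.2 ++ [(fun A => σ A h, G.Tab (histLast h) fun A => σ A h)])

/-- The unique outcome of a full strategy profile from `s0`. -/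
def outcomePlay (G : CGame Stat Agt Act) (σ : Profile Stat Agt Act) : Play Stat Agt Act :=
  ⟨fun m => histLast (outHist G σ m), fun m A => σ A (outHist G σ m)⟩

/-- The payoff vector of a strategy profile. -/
noncomputable def payoffProfile (G : CGame Stat Agt Act) (σ : Profile Stat Agt Act) (A : Agt) :
    ℝ :=
  payoffPlay G A (outcomePlay G σ)

/-! The deviator game `D(G)`. -/

abbrev DState (Stat Agt : Type) := Stat × Set Agt

abbrev DHist (Stat Agt Act : Type) :=
  DState Stat Agt × List (((Agt → Act) × (Agt → Act)) × DState Stat Agt)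

abbrev EveStrategy (Stat Agt Act : Type) := DHist Stat Agt Act → Agt → Act

/-- A play of the deviator game: states together with Eve's and Adam's moves. -/
structure DPlay (Stat Agt Act : Type) where
  state : ℕ → DState Stat Agt
  eveMove : ℕ → Agt → Act
  adamMove : ℕ → Agt → Act

/-- Transition function of the deviator game. -/
def DTab (G : CGame Stat Agt Act) (q : DState Stat Agt) (a a' : Agt → Act) : DState Stat Agt :=
  (G.Tab q.1 a', q.2 ∪ devMove a a')

def DPlay.pref (ρ : DPlay Stat Agt Act) (m : ℕ) : DHist Stat Agt Act :=
  (ρ.state 0, (List.range m).map fun j => ((ρ.eveMove j, ρ.adamMove j), ρ.state (j + 1)))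

/-- Projection of a history of `D(G)` to a history of `G` (first state component, Adam's move). -/
def projHist (h : DHist Stat Agt Act) : Hist Stat Agt Act :=
  (h.1.1, h.2.map fun x => (x.1.2, x.2.1))

/-- Projection `π` of a play of `D(G)` to a play of `G`. -/
def projPlay (ρ : DPlay Stat Agt Act) : Play Stat Agt Act :=
  ⟨fun i => (ρ.state i).1, ρ.adamMove⟩

/-- The Eve strategy `π(σ_Agt)` associated with a strategy profile. -/
def eveOf (σ : Profile Stat Agt Act) : EveStrategy Stat Agt Act :=
  fun h A => σ A (projHist h)

/-- `δ(ρ)`: the limit of the deviator components along a play of `D(G)`. -/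
def delta (ρ : DPlay Stat Agt Act) : Set Agt := ⋃ i : ℕ, (ρ.state i).2

/-- Play of the deviator game from state `q` where Eve follows `σE` and Adam is unconstrained. -/
def IsDPlayFrom (G : CGame Stat Agt Act) (q : DState Stat Agt) (σE : EveStrategy Stat Agt Act)
    (ρ : DPlay Stat Agt Act) : Prop :=
  ρ.state 0 = q ∧
    ∀ j, ρ.eveMove j = σE (ρ.pref j) ∧
      ρ.state (j + 1) = DTab G (ρ.state j) (ρ.eveMove j) (ρ.adamMove j)

/-- Outcome of an Eve strategy from the initial state `(s0, ∅)` of `D(G)`. -/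
def IsOutcome (G : CGame Stat Agt Act) (σE : EveStrategy Stat Agt Act)
    (ρ : DPlay Stat Agt Act) : Prop :=
  IsDPlayFrom G (G.s0, ∅) σE ρ

/-- An Eve strategy is winning for objective `Ω` if all its outcomes belong to `Ω`. -/
def Winning (G : CGame Stat Agt Act) (σE : EveStrategy Stat Agt Act)
    (Ω : Set (DPlay Stat Agt Act)) : Prop :=
  ∀ ρ, IsOutcome G σE ρ → ρ ∈ Ω

/-- `σ` is `k`-resilient: `C`-resilient for every coalition `C` of size at most `k`. -/
def kResilient (G : CGame Stat Agt Act) (σ : Profile Stat Agt Act) (k : ℕ) : Prop :=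
  ∀ C : Set Agt, C.ncard ≤ k → ∀ σ' : Profile Stat Agt Act, ∀ A ∈ C,
    payoffProfile G (combine C σ σ') A ≤ payoffProfile G σ A

/-- `σ` is `(t,r)`-immune: `(C,r)`-immune for every coalition `C` of size at most `t`. -/
def tImmune (G : CGame Stat Agt Act) (σ : Profile Stat Agt Act) (t : ℕ) (r : ℝ) : Prop :=
  ∀ C : Set Agt, C.ncard ≤ t → ∀ σ' : Profile Stat Agt Act, ∀ A ∉ C,
    payoffProfile G σ A - r ≤ payoffProfile G (combine C σ σ') A

/-- The resilience objective `Re(k,p)`. -/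
def ReObj (G : CGame Stat Agt Act) (k : ℕ) (p : Agt → ℝ) : Set (DPlay Stat Agt Act) :=
  {ρ | k < (delta ρ).ncard} ∪
    {ρ | (delta ρ).ncard = k ∧ ∀ A ∈ delta ρ, payoffPlay G A (projPlay ρ) ≤ p A} ∪
    {ρ | (delta ρ).ncard < k ∧ ∀ A : Agt, payoffPlay G A (projPlay ρ) ≤ p A}

/-- The immunity objective `I(t,r,p)`. -/
def ImmObj (G : CGame Stat Agt Act) (t : ℕ) (r : ℝ) (p : Agt → ℝ) : Set (DPlay Stat Agt Act) :=
  {ρ | t < (delta ρ).ncard} ∪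
    {ρ | ∀ A ∉ delta ρ, p A - r ≤ payoffPlay G A (projPlay ρ)}

/-- Mean payoff (liminf) of a weight function on states of `D(G)` along a play. -/
noncomputable def MP (u : DState Stat Agt → ℤ) (ρ : DPlay Stat Agt Act) : ℝ :=
  Filter.liminf
    (fun m => (∑ l ∈ Finset.range (m + 1), (u (ρ.state l) : ℝ)) / (m : ℝ)) Filter.atTop

/-- Mean payoff (limsup) of a weight function on states of `D(G)` along a play. -/
noncomputable def MPSup (u : DState Stat Agt → ℤ) (ρ : DPlay Stat Agt Act) : ℝ :=
  Filter.limsup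
    (fun m => (∑ l ∈ Finset.range (m + 1), (u (ρ.state l) : ℝ)) / (m : ℝ)) Filter.atTop

end Defs

section Aux

variable {Stat Agt Act : Type}

lemma pref_snd_length (ρ : Play Stat Agt Act) (m : ℕ) : (ρ.pref m).2.length = m := by
  simp [Play.pref]

lemma histLast_pref (ρ : Play Stat Agt Act) (m : ℕ) : histLast (ρ.pref m) = ρ.state m := by
  cases m with
  | zero => simp [Play.pref, histLast]
  | succ m =>
      simp [Play.pref, histLast, List.range_succ]

lemma outHist_last_succ (G : CGame Stat Agt Act) (τ : Profile Stat Agt Act) (m : ℕ) :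
    histLast (outHist G τ (m+1)) =
      G.Tab (histLast (outHist G τ m)) (fun A => τ A (outHist G τ m)) := by
  simp [outHist, histLast]

lemma isPlay_outcome (G : CGame Stat Agt Act) (τ : Profile Stat Agt Act) :
    IsPlay G (outcomePlay G τ) := fun j => outHist_last_succ G τ j

lemma pref_outcome (G : CGame Stat Agt Act) (τ : Profile Stat Agt Act) (m : ℕ) :
    (outcomePlay G τ).pref m = outHist G τ m := by
  induction m with
  | zero => rfl
  | succ m ih =>
      show (_, (List.range (m+1)).map _) = _
      rw [List.range_succ, List.map_append]
      have h1 : ((outcomePlay G τ).state 0, (List.range m).map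
          fun j => ((outcomePlay G τ).move j, (outcomePlay G τ).state (j + 1)))
          = outHist G τ m := ih
      show ((outcomePlay G τ).state 0, ((List.range m).map
          (fun j => ((outcomePlay G τ).move j, (outcomePlay G τ).state (j + 1)))) ++
          [((outcomePlay G τ).move m, (outcomePlay G τ).state (m+1))]) = _
      conv_rhs => rw [outHist]
      rw [← h1]
      refine Prod.ext rfl ?_
      simp only
      congr 1
      have hs : (outcomePlay G τ).state (m+1) =
          G.Tab (histLast (outHist G τ m)) (fun A => τ A (outHist G τ m)) :=
        outHist_last_succ G τ m
      have hmv : (outcomePlay G τ).move m = fun A => τ A (outHist G τ m) := rfl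
      rw [h1]
      exact congrArg₂ (fun a b => [(a, b)]) hmv hs

lemma projHist_pref (ρ : DPlay Stat Agt Act) (m : ℕ) :
    projHist (ρ.pref m) = (projPlay ρ).pref m := by
  simp [projHist, DPlay.pref, projPlay, Play.pref, List.map_map, Function.comp]

lemma payoffPlay_congr (G : CGame Stat Agt Act) (A : Agt) {ρ1 ρ2 : Play Stat Agt Act}
    (h : ∀ m, ρ1.state m = ρ2.state m) : payoffPlay G A ρ1 = payoffPlay G A ρ2 := by
  unfold payoffPlay
  congr 1
  funext m
  congr 1
  exact Finset.sum_congr rfl fun l _ => by rw [h l]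

lemma outcome_state_eq (G : CGame Stat Agt Act) (τ : Profile Stat Agt Act)
    (ρG : Play Stat Agt Act) (h0 : ρG.state 0 = G.s0) (hp : IsPlay G ρG)
    (hm : ∀ m B, ρG.move m B = τ B (ρG.pref m)) :
    ∀ m, (outcomePlay G τ).state m = ρG.state m := by
  have key : ∀ m, ρG.pref m = outHist G τ m := by
    intro m
    induction m with
    | zero =>
        show (ρG.state 0, []) = (G.s0, [])
        rw [h0]
    | succ m ih =>
        show (ρG.state 0, (List.range (m+1)).map _) = _
        rw [List.range_succ, List.map_append]
        conv_rhs => rw [outHist]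
        rw [← ih]
        refine Prod.ext rfl ?_
        simp only
        congr 1
        have h2 : ρG.move m = fun A => τ A (ρG.pref m) := funext fun B => hm m B
        have h3 : ρG.state (m+1) = G.Tab (histLast (ρG.pref m)) (fun A => τ A (ρG.pref m)) := by
          rw [histLast_pref, ← h2]; exact hp m
        exact congrArg₂ (fun a b => [(a, b)]) h2 h3
  intro m
  show histLast (outHist G τ m) = ρG.state m
  rw [← key m, histLast_pref]

end Aux

theorem statement5 {Stat Agt Act : Type} [Fintype Stat] [Fintype Agt] [Fintype Act]
    (G : CGame Stat Agt Act) (σ : Profile Stat Agt Act) (t : ℕ) (r : ℝ) :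
    tImmune G σ t r ↔ Winning G (eveOf σ) (ImmObj G t r (payoffProfile G σ)) := by
  constructor
  · intro hImm ρ hOut
    by_cases ht : t < (delta ρ).ncard
    · exact Or.inl ht
    · refine Or.inr ?_
      intro A hA
      have hC : (delta ρ).ncard ≤ t := le_of_not_gt ht
      set σ' : Profile Stat Agt Act := fun B h => ρ.adamMove h.2.length B with hσ'
      set τ : Profile Stat Agt Act := combine (delta ρ) σ σ' with hτ
      obtain ⟨hs0, hj⟩ := hOut
      have hkey : ∀ j B, B ∉ delta ρ → ρ.eveMove j B = ρ.adamMove j B := by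
        intro j B hB
        by_contra hne
        exact hB (Set.mem_iUnion.2 ⟨j + 1, by
          rw [(hj j).2]
          exact Set.mem_union_right _ hne⟩)
      have h0 : (projPlay ρ).state 0 = G.s0 := by
        show (ρ.state 0).1 = G.s0
        rw [hs0]
      have hp : IsPlay G (projPlay ρ) := by
        intro j
        show (ρ.state (j+1)).1 = G.Tab (ρ.state j).1 (ρ.adamMove j)
        rw [(hj j).2]
        rfl
      have hmv : ∀ m B, (projPlay ρ).move m B = τ B ((projPlay ρ).pref m) := by
        intro m B
        by_cases hB : B ∈ delta ρ
        · show ρ.adamMove m B = _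
          rw [hτ, combine, if_pos hB]
          show _ = ρ.adamMove ((projPlay ρ).pref m).2.length B
          rw [pref_snd_length]
        · show ρ.adamMove m B = _
          rw [hτ, combine, if_neg hB]
          have h1 : ρ.eveMove m B = ρ.adamMove m B := hkey m B hB
          have h2 : ρ.eveMove m = eveOf σ (ρ.pref m) := (hj m).1
          rw [← h1, h2]
          show σ B (projHist (ρ.pref m)) = _
          rw [projHist_pref]
      have hstate := outcome_state_eq G τ (projPlay ρ) h0 hp hmv
      have hpay : payoffPlay G A (projPlay ρ) = payoffProfile G τ A :=
        payoffPlay_congr G A fun m => (hstate m).symm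
      rw [hpay]
      exact hImm (delta ρ) hC σ' A hA
  · intro hw C hC σ' A hA
    set τ : Profile Stat Agt Act := combine C σ σ' with hτ
    set ρG : Play Stat Agt Act := outcomePlay G τ with hρG
    let eve : ℕ → Agt → Act := fun i B => σ B (ρG.pref i)
    let D : ℕ → Set Agt := fun i =>
      Nat.rec (∅ : Set Agt) (fun j Dj => Dj ∪ devMove (eve j) (ρG.move j)) i
    set ρ : DPlay Stat Agt Act := ⟨fun i => (ρG.state i, D i), eve, ρG.move⟩ with hρ
    have hprojpref : ∀ m, (projPlay ρ).pref m = ρG.pref m := fun m => rfl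
    have hout : IsOutcome G (eveOf σ) ρ := by
      refine ⟨?_, ?_⟩
      · show (ρG.state 0, (∅ : Set Agt)) = (G.s0, ∅)
        rfl
      · intro j
        constructor
        · funext B
          show eve j B = σ B (projHist (ρ.pref j))
          rw [projHist_pref, hprojpref]
        · show (ρG.state (j+1), D (j+1)) = (G.Tab (ρG.state j) (ρG.move j),
            D j ∪ devMove (eve j) (ρG.move j))
          rw [Prod.mk.injEq]
          exact ⟨isPlay_outcome G τ j, rfl⟩
    have hDsub : ∀ i, D i ⊆ C := by
      intro i
      induction i with
      | zero => exact Set.empty_subset C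
      | succ j ih =>
          refine Set.union_subset ih ?_
          intro B hB
          by_contra hBC
          apply hB
          show eve j B = ρG.move j B
          have h1 : ρG.move j B = τ B (outHist G τ j) := rfl
          rw [h1, hτ, combine, if_neg hBC]
          show σ B (ρG.pref j) = σ B (outHist G τ j)
          rw [pref_outcome]
    have hdsub : delta ρ ⊆ C := by
      refine Set.iUnion_subset fun i => ?_
      show D i ⊆ C
      exact hDsub i
    have hdn : (delta ρ).ncard ≤ t :=
      le_trans (Set.ncard_le_ncard hdsub C.toFinite) hC
    rcases hw ρ hout with h | h
    · exact absurd h (not_lt.2 hdn)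
    · have hAd : A ∉ delta ρ := fun hAd => hA (hdsub hAd)
      have := h A hAd
      have hpay : payoffPlay G A (projPlay ρ) = payoffProfile G τ A :=
        payoffPlay_congr G A fun m => rfl
      rw [hpay] at this
      exact this
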